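/- arXiv:2303.05542 — 2 statements merged into one kernel-verified Lean document; each statement's English description precedes it below -/
import Mathlib

section
/- For integers k ≥ 3 and n ≥ 2, the maximum over 0 < x < k/n of |x·(1/n − x)·(2/n − x)·…·(k/n − x)| is at most k!/(6·n^(k+1)). -/
/-!
Put `y = n x`. The product is `n^{-(k+1)} ∏_{j=0}^{k} |j - y|`, so it suffices to bound
`P_k(y) = ∏_{j=0}^{k} |j - y|` by `k!/6` for `0 ≤ y ≤ k`. For `k = 3` this is the quartic inequality
`|y (y - 1) (y - 2) (y - 3)| ≤ 1`. Going from `k` to `k + 1`: on `[0, k]`,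
`P_{k+1}(y) = P_k(y) |k + 1 - y| ≤ (k + 1) · k!/6`, and the symmetry `P_{k+1}(k + 1 - y) = P_{k+1}(y)`
covers `[k, k + 1]`.
-/

open Finset

open scoped Nat

theorem prod_Icc_zero_natCast {M : Type*} [CommMonoid M] (f : ℤ → M) (k : ℕ) :
    ∏ j ∈ Icc (0 : ℤ) k, f j = ∏ j ∈ range (k + 1), f j := by
  rw [Int.Icc_eq_finset_map, prod_map]
  simp

theorem prod_range_abs_sub_reflect (K : ℕ) (y : ℝ) :
    ∏ j ∈ range (K + 1), |(j : ℝ) - (K - y)| = ∏ j ∈ range (K + 1), |(j : ℝ) - y| := by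
  rw [← prod_range_reflect]
  refine prod_congr rfl fun j hj => ?_
  rw [Nat.add_sub_cancel, Nat.cast_sub (by simpa [Nat.lt_succ_iff] using hj), abs_sub_comm]
  ring_nf

theorem prod_range_four_abs_sub_le_one {y : ℝ} (h0 : 0 ≤ y) (h3 : y ≤ 3) :
    ∏ j ∈ range 4, |(j : ℝ) - y| ≤ 1 := by
  -- with `u = y² - 3y ∈ [-9/4, 0]` the product is `1 - (u + 1)²`
  have : |y * (1 - y) * (2 - y) * (3 - y)| ≤ 1 :=
    abs_le.2 ⟨by nlinarith [mul_nonneg (sq_nonneg (y - 3 / 2)) (mul_nonneg h0 (sub_nonneg.2 h3))],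
      by nlinarith [sq_nonneg (y ^ 2 - 3 * y + 1)]⟩
  simpa [prod_range_succ, abs_mul, abs_sub_comm] using this

theorem prod_range_abs_sub_le_factorial_div_six {K : ℕ} (hK : 3 ≤ K) {y : ℝ} (h0 : 0 ≤ y)
    (hy : y ≤ K) : ∏ j ∈ range (K + 1), |(j : ℝ) - y| ≤ K ! / 6 := by
  induction K, hK using Nat.le_induction generalizing y with
  | base => simpa [Nat.factorial] using prod_range_four_abs_sub_le_one h0 (by exact_mod_cast hy)
  | succ K hK ih =>
    have hIcc : ∀ z : ℝ, 0 ≤ z → z ≤ K →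
        ∏ j ∈ range (K + 1 + 1), |(j : ℝ) - z| ≤ (K + 1)! / 6 := by
      intro z hz0 hzK
      rw [prod_range_succ, Nat.factorial_succ, Nat.cast_mul, mul_comm, mul_div_assoc]
      gcongr
      · rw [abs_le]; push_cast; constructor <;> linarith
      · exact ih hz0 hzK
    rcases le_or_gt y K with hyK | hyK
    · exact hIcc y h0 hyK
    · have hsymm := prod_range_abs_sub_reflect (K + 1) (K + 1 - y)
      push_cast at hsymm hy
      rw [sub_sub_cancel] at hsymm
      rw [hsymm]
      have hK3 : (3 : ℝ) ≤ K := by exact_mod_cast hK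
      exact hIcc _ (by linarith) (by linarith)

theorem stmt_1 (k n : ℤ) (hk : 3 ≤ k) (hn : 2 ≤ n) :
    ∀ x : ℝ, 0 < x → x < (k : ℝ) / n →
      |∏ j ∈ Finset.Icc (0 : ℤ) k, ((j : ℝ) / n - x)| ≤ (Nat.factorial k.toNat : ℝ) / (6 * (n : ℝ) ^ (k.toNat + 1)) := by
  intro x hx0 hxk
  lift k to ℕ using (by omega)
  have hn0 : (0 : ℝ) < n := by exact_mod_cast (by omega : (0 : ℤ) < n)
  have hy : n * x ≤ k := by
    rw [lt_div_iff₀ hn0] at hxk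
    push_cast at hxk
    linarith
  have hscale (j : ℕ) : |(j : ℝ) / n - x| = |(j : ℝ) - n * x| / n := by
    rw [div_sub' hn0.ne', abs_div, abs_of_pos hn0]
  rw [prod_Icc_zero_natCast (fun j : ℤ => (j : ℝ) / n - x), abs_prod]
  simp only [Int.cast_natCast, hscale, prod_div_distrib, prod_const, card_range,
    Int.toNat_natCast, div_mul_eq_div_div]
  gcongr
  exact prod_range_abs_sub_le_factorial_div_six (by omega) (by positivity) hy
end

section
/- For any integer t ≥ 1 and real c > 1, ∫_{ct}^∞ e^{-x} x^{t-1} dx ≤ (c/(c−1)) · e^{-ct} · (ct)^{t-1}. -/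
/-!
On `[a, ∞)` the factor `x ^ n` is dominated by an exponential through `x / a ≤ exp (x / a - 1)`,
so `exp (-x) * x ^ n ≤ a ^ n * exp (-a) * exp (-(1 - n / a) * (x - a))`: the integrand decays at
least at the rate `1 - n / a`, which yields the tail bound `a / (a - n) * exp (-a) * a ^ n` of the
incomplete Gamma function whenever `n < a`. For `a = c t` and `n = t - 1`,
`a / (a - n) ≤ c / (c - 1)`.
-/

open Real MeasureTheory Set

lemma pow_le_pow_mul_exp {a x : ℝ} (ha : 0 < a) (hx : 0 ≤ x) (n : ℕ) :
    x ^ n ≤ a ^ n * exp (n * (x / a - 1)) := by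
  have hxa : x ≤ a * exp (x / a - 1) := by
    have := add_one_le_exp (x / a - 1)
    calc x = a * (x / a) := by field_simp
      _ ≤ a * exp (x / a - 1) := by gcongr; linarith
  calc x ^ n ≤ (a * exp (x / a - 1)) ^ n := by gcongr
    _ = a ^ n * exp (n * (x / a - 1)) := by rw [mul_pow, ← exp_nat_mul]

lemma exp_neg_mul_pow_le {a x : ℝ} (ha : 0 < a) (hx : 0 ≤ x) (n : ℕ) :
    exp (-x) * x ^ n ≤ a ^ n * exp (-a) * exp (-((a - n) / a) * (x - a)) := by
  calc exp (-x) * x ^ n ≤ exp (-x) * (a ^ n * exp (n * (x / a - 1))) := by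
        gcongr; exact pow_le_pow_mul_exp ha hx n
    _ = a ^ n * exp (-x + n * (x / a - 1)) := by rw [exp_add]; ring
    _ = a ^ n * exp (-a) * exp (-((a - n) / a) * (x - a)) := by
        have hexp : -x + n * (x / a - 1) = -a + -((a - n) / a) * (x - a) := by field_simp; ring
        rw [hexp, exp_add, mul_assoc]

lemma exp_neg_mul_sub_eq (a b : ℝ) :
    (fun x ↦ exp (-b * (x - a))) = fun x ↦ exp (b * a) * exp (-b * x) := by
  ext x; rw [← exp_add]; ring_nf

lemma integrableOn_exp_neg_mul_sub_Ioi (a : ℝ) {b : ℝ} (hb : 0 < b) :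
    IntegrableOn (fun x ↦ exp (-b * (x - a))) (Ioi a) := by
  rw [exp_neg_mul_sub_eq]
  exact (exp_neg_integrableOn_Ioi a hb).const_mul _

lemma integral_exp_neg_mul_sub_Ioi (a : ℝ) {b : ℝ} (hb : 0 < b) :
    ∫ x in Ioi a, exp (-b * (x - a)) = b⁻¹ := by
  rw [exp_neg_mul_sub_eq, integral_const_mul, integral_exp_mul_Ioi (neg_neg_of_pos hb),
    neg_div_neg_eq, ← mul_div_assoc, ← exp_add]
  simp

theorem integral_exp_neg_mul_pow_Ioi_le {a : ℝ} {n : ℕ} (hn : (n : ℝ) < a) :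
    ∫ x in Ioi a, exp (-x) * x ^ n ≤ a / (a - n) * exp (-a) * a ^ n := by
  have ha : 0 < a := (Nat.cast_nonneg n).trans_lt hn
  have hb : 0 < (a - n) / a := div_pos (sub_pos.2 hn) ha
  calc ∫ x in Ioi a, exp (-x) * x ^ n
      ≤ ∫ x in Ioi a, a ^ n * exp (-a) * exp (-((a - n) / a) * (x - a)) := by
        refine integral_mono_of_nonneg ?_
          ((integrableOn_exp_neg_mul_sub_Ioi a hb).const_mul _) ?_
        all_goals filter_upwards [ae_restrict_mem measurableSet_Ioi] with x hx
        · have : 0 ≤ x := ha.le.trans hx.le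
          positivity
        · exact exp_neg_mul_pow_le ha (ha.le.trans hx.le) n
    _ = a / (a - n) * exp (-a) * a ^ n := by
        rw [integral_const_mul, integral_exp_neg_mul_sub_Ioi a hb, inv_div]
        ring

theorem stmt_15 (t : ℕ) (ht : 1 ≤ t) (c : ℝ) (hc : 1 < c) :
    ∫ x in Set.Ioi (c * t), Real.exp (-x) * x ^ (t - 1) ≤
      c / (c - 1) * Real.exp (-(c * t)) * (c * t) ^ (t - 1) := by
  have ht' : (1 : ℝ) ≤ t := by exact_mod_cast ht
  have hn : ((t - 1 : ℕ) : ℝ) = t - 1 := by push_cast [Nat.cast_sub ht]; ring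
  have hlt : ((t - 1 : ℕ) : ℝ) < c * t := by rw [hn]; nlinarith
  have hfactor : c * t / (c * t - (t - 1 : ℕ)) ≤ c / (c - 1) := by
    rw [hn, div_le_div_iff₀ (by nlinarith) (by linarith)]
    nlinarith
  calc _ ≤ c * t / (c * t - (t - 1 : ℕ)) * exp (-(c * t)) * (c * t) ^ (t - 1) :=
        integral_exp_neg_mul_pow_Ioi_le hlt
    _ ≤ _ := by
        have : 0 ≤ c * t := by positivity
        gcongr
end
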